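/- arXiv:2310.14529 — 7 statements merged into one kernel-verified Lean document; each statement's English description precedes it below -/
import Mathlib

section
/- For any nonzero q ∈ ℂ and any integers n₁,…,n₆, the operators defined below satisfy the tetrahedron equation P^{(n₅−n₆)}_{456} ∘ P^{(n₃−n₆)}_{236} ∘ P^{(n₃−n₅)}_{135} ∘ P^{(n₂−n₄)}_{124} = P^{(n₂−n₄)}_{124} ∘ P^{(n₃−n₅)}_{135} ∘ P^{(n₃−n₆)}_{236} ∘ P^{(n₅−n₆)}_{456} as linear endomorphisms of V₆. -/
/- STATEMENT 0: The monomial operators P^{(r)}_{xyz} on the space V₆ of finitely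
supported functions ℤ⁶ → ℂ satisfy the tetrahedron equation
P^{(n₅−n₆)}_{456} P^{(n₃−n₆)}_{236} P^{(n₃−n₅)}_{135} P^{(n₂−n₄)}_{124}
= P^{(n₂−n₄)}_{124} P^{(n₃−n₅)}_{135} P^{(n₃−n₆)}_{236} P^{(n₅−n₆)}_{456}. -/

noncomputable section

/-- V₆: finitely supported functions ℤ⁶ → ℂ, with basis |m⟩, m ∈ ℤ⁶. -/
abbrev V6 : Type := (Fin 6 → ℤ) →₀ ℂ

/-- The operator P^{(r)}_{xyz} defined on the basis by
`P^{(r)}_{xyz}|m⟩ = q^{(m_z−r−m_y)(m_z−r−m_y−2m_x)−2r m_x} |m′⟩`, where `m′` agrees with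
`m` except `m′_x = m_x + m_y − m_z + r`, `m′_y = m_z − r`, `m′_z = m_y`. -/
def Pmon (q : ℂ) (r : ℤ) (x y z : Fin 6) : V6 →ₗ[ℂ] V6 :=
  Finsupp.lsum ℂ fun m =>
    (q ^ ((m z - r - m y) * (m z - r - m y - 2 * m x) - 2 * r * m x)) •
      Finsupp.lsingle (fun t =>
        if t = x then m x + m y - m z + r
        else if t = y then m z - r
        else if t = z then m y
        else m t)

/-!
Each `P^{(r)}_{xyz}` is a monomial operator `|m⟩ ↦ q^{e(m)} |σ(m)⟩`, and for `q ≠ 0` monomial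
operators compose by composing the lattice maps `σ` and adding the exponents along the way.
So both sides of the tetrahedron equation are monomial operators, and they agree because their
lattice maps agree (an identity of affine maps of `ℤ⁶`) and their exponents agree (a polynomial
identity in `m` and the `nᵢ`).
-/

section MonomialMap

variable {K : Type*} [Field K] {α β γ : Type*}

def monomialMap (q : K) (e : α → ℤ) (f : α → β) : (α →₀ K) →ₗ[K] (β →₀ K) :=
  Finsupp.lsum K fun m => q ^ e m • Finsupp.lsingle (f m)

@[simp]
theorem monomialMap_single (q : K) (e : α → ℤ) (f : α → β) (m : α) (c : K) :
    monomialMap q e f (Finsupp.single m c) = q ^ e m • Finsupp.single (f m) c := by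
  simp [monomialMap]

theorem monomialMap_comp {q : K} (hq : q ≠ 0) (e' : β → ℤ) (g : β → γ) (e : α → ℤ)
    (f : α → β) :
    (monomialMap q e' g).comp (monomialMap q e f) =
      monomialMap q (fun m => e m + e' (f m)) (g ∘ f) := by
  refine Finsupp.lhom_ext fun m c => ?_
  rw [LinearMap.comp_apply, monomialMap_single, map_smul, monomialMap_single, smul_smul,
    monomialMap_single, zpow_add₀ hq, mul_comm, Function.comp_apply]

end MonomialMap

section PmonData

variable {ι : Type*} [DecidableEq ι]

def pmonLatticeMap (r : ℤ) (x y z : ι) (m : ι → ℤ) : ι → ℤ := fun t =>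
  if t = x then m x + m y - m z + r
  else if t = y then m z - r
  else if t = z then m y
  else m t

def pmonExponent (r : ℤ) (x y z : ι) (m : ι → ℤ) : ℤ :=
  (m z - r - m y) * (m z - r - m y - 2 * m x) - 2 * r * m x

end PmonData

theorem Pmon_eq_monomialMap (q : ℂ) (r : ℤ) (x y z : Fin 6) :
    Pmon q r x y z = monomialMap q (pmonExponent r x y z) (pmonLatticeMap r x y z) :=
  rfl

theorem pmonLatticeMap_tetrahedron (n2 n3 n4 n5 n6 : ℤ) :
    pmonLatticeMap (n5 - n6) (3 : Fin 6) 4 5 ∘ pmonLatticeMap (n3 - n6) 1 2 5 ∘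
        pmonLatticeMap (n3 - n5) 0 2 4 ∘ pmonLatticeMap (n2 - n4) 0 1 3 =
      pmonLatticeMap (n2 - n4) (0 : Fin 6) 1 3 ∘ pmonLatticeMap (n3 - n5) 0 2 4 ∘
        pmonLatticeMap (n3 - n6) 1 2 5 ∘ pmonLatticeMap (n5 - n6) 3 4 5 := by
  funext m t
  fin_cases t <;>
    simp only [pmonLatticeMap, Function.comp_apply, Fin.reduceEq, ↓reduceIte, Fin.isValue,
      Fin.zero_eta, Fin.mk_one, Fin.reduceFinMk, one_ne_zero, zero_ne_one] <;>
    ring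

theorem tetrahedron_monomial_general (q : ℂ) (hq : q ≠ 0) (n2 n3 n4 n5 n6 : ℤ) :
    (Pmon q (n5 - n6) 3 4 5).comp ((Pmon q (n3 - n6) 1 2 5).comp
      ((Pmon q (n3 - n5) 0 2 4).comp (Pmon q (n2 - n4) 0 1 3))) =
    (Pmon q (n2 - n4) 0 1 3).comp ((Pmon q (n3 - n5) 0 2 4).comp
      ((Pmon q (n3 - n6) 1 2 5).comp (Pmon q (n5 - n6) 3 4 5))) := by
  simp only [Pmon_eq_monomialMap, monomialMap_comp hq]
  congr 1
  · funext m
    simp only [pmonExponent, pmonLatticeMap, Function.comp_apply, Fin.reduceEq, ↓reduceIte,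
      Fin.isValue, one_ne_zero, zero_ne_one]
    ring
  · exact pmonLatticeMap_tetrahedron n2 n3 n4 n5 n6

/-- The tetrahedron equation for the monomial operators (indices 1,…,6 are
represented 0-based as 0,…,5). -/
theorem tetrahedron_monomial (q : ℂ) (hq : q ≠ 0) (n1 n2 n3 n4 n5 n6 : ℤ) :
    (Pmon q (n5 - n6) 3 4 5).comp ((Pmon q (n3 - n6) 1 2 5).comp
      ((Pmon q (n3 - n5) 0 2 4).comp (Pmon q (n2 - n4) 0 1 3))) =
    (Pmon q (n2 - n4) 0 1 3).comp ((Pmon q (n3 - n5) 0 2 4).comp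
      ((Pmon q (n3 - n6) 1 2 5).comp (Pmon q (n5 - n6) 3 4 5))) :=
  tetrahedron_monomial_general q hq n2 n3 n4 n5 n6

end
end

section
/- For each basis vector |i,j,k⟩ the composite R|i,j,k⟩ = D₁(D₂(P(D₃(D₄|i,j,k⟩)))) is well defined (every sum arising at each point of ℤ³ has only finitely many nonzero terms), and its value at (a,b,c) ∈ ℤ³ is zero unless a+b = i+j and b+r−k ≥ 0, in which case it equals (κ₁/κ₃)^{b+r−k} · q^{(c−k+r)(c+k−r−2b)+2i(c−k)} · ∏_{n≥0}(1+κ₃q^{2c−2b+2n+1}) · ∏_{n≥0}(1−q^{2+2j−2c+2n}) / [ ∏_{n≥1}(1−q^{2n}) · ∏_{n≥0}(1+κ₂q^{2j−2k+2n+1}) · ∏_{t=0}^{b+r−k−1}(1−q^{2k−2b−2r+2t}) ]. -/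
/-!
Each factor of `R` moves the support of `|i,j,k⟩` along a single line, so at every point of `ℤ³`
each of the sums defining `D₃` and `D₂` has at most one nonzero term: `D₃ D₄ |i,j,k⟩` lives on
`{(i, j, k + m)}`, `P` carries this onto the plane `a + b = i + j`, and `D₂` then keeps only the
term `n = j - c`. The matrix element is thus a single product of coefficients. It takes the stated
form after writing `∏ₙ (1 - q^(2n+2)) = (q²;q²)_{j-c} · ∏ₙ (1 - q^(2+2j-2c+2n))` and reflecting
`∏_{t<M} (1 - q^(2t-2M)) = (-1)^M q^(-M²-M) (q²;q²)_M` with `M = b + r - k`. For `c > j` both sides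
vanish, the right one through the factor `n = c - j - 1` of `∏ₙ (1 - q^(2+2j-2c+2n))`.
-/

noncomputable section

/-- The space of all functions ℤ³ → ℂ (finitely supported ones form V₃,
with |i,j,k⟩ the indicator of (i,j,k)). -/
abbrev W3 : Type := ℤ × ℤ × ℤ → ℂ

/-- The basis vector |i,j,k⟩ of V₃, as a function ℤ³ → ℂ. -/
def delta (i j k : ℤ) : W3 := fun p => if p = (i, j, k) then 1 else 0

/-- (q²;q²)_m = ∏_{t=1}^{m}(1−q^{2t}). -/
def qpoch (q : ℂ) (m : ℕ) : ℂ := ∏ t ∈ Finset.range m, (1 - q ^ (2 * (t + 1)))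

/-- D₄|i,j,k⟩ = [∏_{n≥0}(1+κ₂q^{2j−2k+2n+1})]⁻¹ |i,j,k⟩ (diagonal operator,
written on functions). -/
def D4 (q κ₂ : ℂ) (f : W3) : W3 := fun p =>
  (∏' n : ℕ, (1 + κ₂ * q ^ (2 * p.2.1 - 2 * p.2.2 + 2 * (n : ℤ) + 1)))⁻¹ * f p

/-- The m-th term of the sum defining D₃ at the point p:
D₃|i,j,k⟩ = Σ_{m≥0} (−qκ₁κ₃⁻¹q^{2i})^m/(q²;q²)_m |i,j,k+m⟩, written on functions. -/
def D3term (q κ₁ κ₃ : ℂ) (f : W3) (p : ℤ × ℤ × ℤ) (m : ℕ) : ℂ :=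
  ((-q * κ₁ * κ₃⁻¹ * q ^ (2 * p.1)) ^ m / qpoch q m) * f (p.1, p.2.1, p.2.2 - m)

def D3 (q κ₁ κ₃ : ℂ) (f : W3) : W3 := fun p => ∑' m : ℕ, D3term q κ₁ κ₃ f p m

/-- P|i,j,k⟩ = q^{(k−r−j)(k−r−j−2i)−2ri}|i+j−k+r, k−r, j⟩, extended to all
functions through the corresponding bijection of ℤ³. -/
def Pop (q : ℂ) (r : ℤ) (f : W3) : W3 := fun p =>
  q ^ ((p.2.1 - p.2.2) * (p.2.1 - p.2.2 - 2 * (p.1 + p.2.1 - p.2.2))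
        - 2 * r * (p.1 + p.2.1 - p.2.2)) *
    f (p.1 + p.2.1 - p.2.2, p.2.2, p.2.1 + r)

/-- The n-th term of the sum defining D₂ at the point (a,b,c):
(D₂f)(a,b,c) = Σ_{n≥0} [q^{n²−2an}/(q²;q²)_n] f(a,b,c+n). -/
def D2term (q : ℂ) (f : W3) (p : ℤ × ℤ × ℤ) (n : ℕ) : ℂ :=
  (q ^ ((n : ℤ) ^ 2 - 2 * p.1 * (n : ℤ)) / qpoch q n) * f (p.1, p.2.1, p.2.2 + n)

def D2 (q : ℂ) (f : W3) : W3 := fun p => ∑' n : ℕ, D2term q f p n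

/-- (D₁f)(a,b,c) = ∏_{n≥0}(1+κ₃q^{2c−2b+2n+1}) · f(a,b,c). -/
def D1 (q κ₃ : ℂ) (f : W3) : W3 := fun p =>
  (∏' n : ℕ, (1 + κ₃ * q ^ (2 * p.2.2 - 2 * p.2.1 + 2 * (n : ℤ) + 1))) * f p

/-- R = D₁∘D₂∘P∘D₃∘D₄. -/
def Rop (q κ₁ κ₂ κ₃ : ℂ) (r : ℤ) (f : W3) : W3 :=
  D1 q κ₃ (D2 q (Pop q r (D3 q κ₁ κ₃ (D4 q κ₂ f))))

open Finset

section QSeries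

variable {q : ℂ}

lemma one_sub_zpow_ne_zero (hq1 : ‖q‖ < 1) {e : ℤ} (he : 0 < e) : 1 - q ^ e ≠ 0 := by
  obtain ⟨n, rfl⟩ := Int.eq_ofNat_of_zero_le he.le
  rw [zpow_natCast, sub_ne_zero]
  refine fun h => (pow_lt_one₀ (norm_nonneg q) hq1 (Int.natCast_pos.1 he).ne').ne ?_
  rw [← norm_pow, ← h, norm_one]

lemma qpoch_eq_prod_zpow (m : ℕ) :
    qpoch q m = ∏ t ∈ range m, (1 - q ^ (2 * (t : ℤ) + 2)) := by
  refine prod_congr rfl fun t _ => ?_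
  rw [← zpow_natCast]
  push_cast
  ring_nf

lemma qpoch_ne_zero (hq1 : ‖q‖ < 1) (m : ℕ) : qpoch q m ≠ 0 := by
  rw [qpoch_eq_prod_zpow]
  exact prod_ne_zero_iff.2 fun t _ => one_sub_zpow_ne_zero hq1 (by positivity)

lemma summable_norm_zpow_add_two_mul (hq0 : q ≠ 0) (hq1 : ‖q‖ < 1) (s : ℤ) :
    Summable fun n : ℕ => ‖q ^ (s + 2 * (n : ℤ))‖ := by
  have hgeom := (summable_geometric_of_lt_one (by positivity) (pow_lt_one₀ (norm_nonneg q) hq1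
    two_ne_zero)).mul_left (‖q‖ ^ s)
  refine hgeom.congr fun n => ?_
  rw [zpow_add₀ hq0, norm_mul, norm_zpow, norm_zpow, ← pow_mul, ← zpow_natCast]
  push_cast
  rfl

lemma multipliable_one_sub_zpow (hq0 : q ≠ 0) (hq1 : ‖q‖ < 1) (s : ℤ) :
    Multipliable fun n : ℕ => 1 - q ^ (s + 2 * (n : ℤ)) := by
  simpa only [sub_eq_add_neg] using Complex.multipliable_one_add_of_summable
    (summable_norm_zpow_add_two_mul hq0 hq1 s).of_norm.neg

lemma tprod_one_sub_zpow_ne_zero (hq0 : q ≠ 0) (hq1 : ‖q‖ < 1) {s : ℤ} (hs : 0 < s) :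
    ∏' n : ℕ, (1 - q ^ (s + 2 * (n : ℤ))) ≠ 0 := by
  simpa only [sub_eq_add_neg] using tprod_one_add_ne_zero_of_summable
    (f := fun n : ℕ => -q ^ (s + 2 * (n : ℤ)))
    (fun n => by simpa only [← sub_eq_add_neg] using one_sub_zpow_ne_zero hq1 (by omega))
    (by simpa only [norm_neg] using summable_norm_zpow_add_two_mul hq0 hq1 s)

lemma tprod_one_sub_zpow_eq_qpoch_mul (hq0 : q ≠ 0) (hq1 : ‖q‖ < 1) (m : ℕ) :
    ∏' n : ℕ, (1 - q ^ (2 * (n : ℤ) + 2))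
      = qpoch q m * ∏' n : ℕ, (1 - q ^ ((2 * m + 2) + 2 * (n : ℤ))) := by
  have hshift : ∀ n : ℕ, (2 * ((n + m : ℕ) : ℤ) + 2) = (2 * m + 2) + 2 * (n : ℤ) := by
    intro n; push_cast; ring
  have htail : Multipliable fun n : ℕ => 1 - q ^ (2 * ((n + m : ℕ) : ℤ) + 2) := by
    simp only [hshift]
    exact multipliable_one_sub_zpow hq0 hq1 (2 * m + 2)
  rw [← Multipliable.prod_mul_tprod_nat_mul' (f := fun t : ℕ => 1 - q ^ (2 * (t : ℤ) + 2)) htail]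
  simp only [hshift, qpoch_eq_prod_zpow]

lemma prod_range_one_sub_zpow_neg (hq0 : q ≠ 0) (M : ℕ) :
    ∏ t ∈ range M, (1 - q ^ (-(2 * (t : ℤ) + 2)))
      = (-1) ^ M * q ^ (-((M : ℤ) ^ 2 + M)) * qpoch q M := by
  induction M with
  | zero => simp [qpoch]
  | succ M ih =>
    rw [prod_range_succ, ih, qpoch, qpoch, prod_range_succ,
      show q ^ (2 * (M + 1)) = q ^ (2 * (M : ℤ) + 2) by rw [← zpow_natCast]; push_cast; ring_nf,
      show -(((M + 1 : ℕ) : ℤ) ^ 2 + ((M + 1 : ℕ) : ℤ)) = -((M : ℤ) ^ 2 + M) + -(2 * M + 2) by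
        push_cast; ring, zpow_add₀ hq0, zpow_neg q (2 * (M : ℤ) + 2)]
    have : q ^ (2 * (M : ℤ) + 2) ≠ 0 := zpow_ne_zero _ hq0
    field_simp
    ring

end QSeries

section SupportedAtOnePoint

variable {α : Type*} (P : Prop) [Decidable P] (e : ℤ) (g : ℕ → α)

lemma finite_setOf_ite_natCast_eq_ne_zero [Zero α] :
    {m : ℕ | (if P ∧ (m : ℤ) = e then g m else 0) ≠ 0}.Finite := by
  refine (Set.finite_singleton e.toNat).subset fun m hm => ?_
  by_contra hne
  exact hm (if_neg fun h => hne (by simp only [Set.mem_singleton_iff]; omega))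

lemma tsum_ite_natCast_eq [AddCommMonoid α] [TopologicalSpace α] :
    ∑' m : ℕ, (if P ∧ (m : ℤ) = e then g m else 0) = if P ∧ 0 ≤ e then g e.toNat else 0 := by
  split_ifs with h
  · rw [tsum_eq_single e.toNat fun m hm => if_neg fun h' => hm (by omega),
      if_pos ⟨h.1, by omega⟩]
  · exact (tsum_congr fun m => if_neg fun h' => h ⟨h'.1, by omega⟩).trans tsum_zero

end SupportedAtOnePoint

def d3Coeff (q κ₁ κ₃ : ℂ) (i : ℤ) (m : ℕ) : ℂ := (-q * κ₁ * κ₃⁻¹ * q ^ (2 * i)) ^ m / qpoch q m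

def d4Factor (q κ₂ : ℂ) (j k : ℤ) : ℂ :=
  ∏' n : ℕ, (1 + κ₂ * q ^ (2 * j - 2 * k + 2 * (n : ℤ) + 1))

section MatrixElements

variable (q κ₁ κ₂ κ₃ : ℂ) (r i j k : ℤ)

lemma delta_apply (a b c : ℤ) :
    delta i j k (a, b, c) = if a = i ∧ b = j ∧ c = k then 1 else 0 := by
  simp only [delta, Prod.mk.injEq]

lemma D3term_D4_delta (x y z : ℤ) (m : ℕ) :
    D3term q κ₁ κ₃ (D4 q κ₂ (delta i j k)) (x, y, z) m
      = if (x = i ∧ y = j) ∧ (m : ℤ) = z - k then d3Coeff q κ₁ κ₃ i m * (d4Factor q κ₂ j k)⁻¹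
        else 0 := by
  simp only [D3term, D4, delta_apply, d3Coeff, d4Factor]
  split_ifs with h₁ h₂ h₂
  · obtain ⟨⟨rfl, rfl⟩, -⟩ := h₂
    rw [show z - m = k by omega, mul_one]
  · exact absurd ⟨⟨h₁.1, h₁.2.1⟩, by omega⟩ h₂
  · exact absurd ⟨h₂.1.1, h₂.1.2, by omega⟩ h₁
  · simp

lemma D3_D4_delta_apply (x y z : ℤ) :
    D3 q κ₁ κ₃ (D4 q κ₂ (delta i j k)) (x, y, z)
      = if (x = i ∧ y = j) ∧ 0 ≤ z - k then
          d3Coeff q κ₁ κ₃ i (z - k).toNat * (d4Factor q κ₂ j k)⁻¹ else 0 := by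
  simp only [D3, D3term_D4_delta, tsum_ite_natCast_eq]

lemma D2term_Pop_D3_D4_delta (a b c : ℤ) (n : ℕ) :
    D2term q (Pop q r (D3 q κ₁ κ₃ (D4 q κ₂ (delta i j k)))) (a, b, c) n
      = if (a + b = i + j ∧ 0 ≤ b + r - k) ∧ (n : ℤ) = j - c then
          q ^ ((n : ℤ) ^ 2 - 2 * a * n) / qpoch q n * q ^ ((b - j) * (b - j - 2 * i) - 2 * r * i)
            * d3Coeff q κ₁ κ₃ i (b + r - k).toNat * (d4Factor q κ₂ j k)⁻¹
        else 0 := by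
  simp only [D2term, Pop, D3_D4_delta_apply]
  split_ifs with h₁ h₂ h₂
  · obtain ⟨⟨hab, -⟩, hn⟩ := h₂
    rw [show c + n = j by omega, show a + b - j = i by omega]
    ring
  · exact absurd ⟨⟨by omega, by omega⟩, by omega⟩ h₂
  · exact absurd ⟨⟨by omega, by omega⟩, by omega⟩ h₁
  · simp

lemma Rop_delta_apply (a b c : ℤ) :
    Rop q κ₁ κ₂ κ₃ r (delta i j k) (a, b, c)
      = (∏' n : ℕ, (1 + κ₃ * q ^ (2 * c - 2 * b + 2 * (n : ℤ) + 1))) *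
        if (a + b = i + j ∧ 0 ≤ b + r - k) ∧ 0 ≤ j - c then
          q ^ (((j - c).toNat : ℤ) ^ 2 - 2 * a * (j - c).toNat) / qpoch q (j - c).toNat
            * q ^ ((b - j) * (b - j - 2 * i) - 2 * r * i)
            * d3Coeff q κ₁ κ₃ i (b + r - k).toNat * (d4Factor q κ₂ j k)⁻¹
        else 0 := by
  simp only [Rop, D1, D2, D2term_Pop_D3_D4_delta, tsum_ite_natCast_eq]

end MatrixElements

lemma d3Coeff_eq {q : ℂ} (hq0 : q ≠ 0) (κ₁ κ₃ : ℂ) (i : ℤ) (M : ℕ) :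
    d3Coeff q κ₁ κ₃ i M = (-1) ^ M * (κ₁ / κ₃) ^ M * q ^ ((1 + 2 * i) * M) / qpoch q M := by
  rw [d3Coeff, show -q * κ₁ * κ₃⁻¹ * q ^ (2 * i) = -1 * (κ₁ / κ₃) * q ^ (1 + 2 * i) by
    rw [zpow_add₀ hq0, zpow_one]; ring, mul_pow, mul_pow, ← zpow_natCast (q ^ _), ← zpow_mul]

lemma surviving_term_eq_closed_form {q : ℂ} (hq0 : q ≠ 0) (hq1 : ‖q‖ < 1) {κ₁ κ₂ κ₃ : ℂ}
    {r i j k a b c : ℤ} (hab : a + b = i + j) (hbk : 0 ≤ b + r - k) (hcj : 0 ≤ j - c) (D : ℂ) :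
    D * (q ^ (((j - c).toNat : ℤ) ^ 2 - 2 * a * (j - c).toNat) / qpoch q (j - c).toNat
            * q ^ ((b - j) * (b - j - 2 * i) - 2 * r * i)
            * d3Coeff q κ₁ κ₃ i (b + r - k).toNat * (d4Factor q κ₂ j k)⁻¹)
      = (κ₁ / κ₃) ^ (b + r - k)
            * q ^ ((c - k + r) * (c + k - r - 2 * b) + 2 * i * (c - k))
            * D
            * (∏' n : ℕ, (1 - q ^ (2 + 2 * j - 2 * c + 2 * (n : ℤ))))
            / ((∏' n : ℕ, (1 - q ^ (2 * (n : ℤ) + 2)))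
                * d4Factor q κ₂ j k
                * (∏ t ∈ range (b + r - k).toNat,
                    (1 - q ^ (2 * k - 2 * b - 2 * r + 2 * (t : ℤ))))) := by
  obtain ⟨n, hn⟩ : ∃ n : ℕ, (n : ℤ) = j - c := ⟨_, Int.toNat_of_nonneg hcj⟩
  obtain ⟨M, hM⟩ : ∃ M : ℕ, (M : ℤ) = b + r - k := ⟨_, Int.toNat_of_nonneg hbk⟩
  have htail : ∏' t : ℕ, (1 - q ^ (2 + 2 * j - 2 * c + 2 * (t : ℤ)))
      = ∏' t : ℕ, (1 - q ^ ((2 * n + 2) + 2 * (t : ℤ))) :=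
    tprod_congr fun t => by rw [show 2 + 2 * j - 2 * c = 2 * n + 2 by omega]
  -- the sign is written as `((-1) ^ M)⁻¹` so that `field_simp` cancels it against `d3Coeff_eq`
  have hfinite : ∏ t ∈ range M, (1 - q ^ (2 * k - 2 * b - 2 * r + 2 * (t : ℤ)))
      = ((-1) ^ M)⁻¹ * (q ^ ((M : ℤ) ^ 2 + M))⁻¹ * qpoch q M := by
    rw [← inv_pow, inv_neg_one, ← zpow_neg, ← prod_range_one_sub_zpow_neg hq0, ← prod_range_reflect]
    refine prod_congr rfl fun t ht => ?_
    have := mem_range.1 ht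
    congr 2
    omega
  have hexp : q ^ ((n : ℤ) ^ 2 - 2 * a * n) * q ^ ((b - j) * (b - j - 2 * i) - 2 * r * i)
        * q ^ ((1 + 2 * i) * M)
      = q ^ ((c - k + r) * (c + k - r - 2 * b) + 2 * i * (c - k)) * q ^ ((M : ℤ) ^ 2 + M) := by
    simp only [← zpow_add₀ hq0]
    congr 1
    rw [hn, hM, show a = i + j - b by omega]
    ring
  have hPj := tprod_one_sub_zpow_ne_zero hq0 hq1 (show (0 : ℤ) < 2 * n + 2 by omega)
  have hQn := qpoch_ne_zero hq1 n
  have hQM := qpoch_ne_zero hq1 M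
  have hqM : q ^ ((M : ℤ) ^ 2 + M) ≠ 0 := zpow_ne_zero _ hq0
  rw [show (j - c).toNat = n by omega, show (b + r - k).toNat = M by omega, ← hM, zpow_natCast,
    htail, tprod_one_sub_zpow_eq_qpoch_mul hq0 hq1 n, hfinite, d3Coeff_eq hq0]
  field_simp
  linear_combination (D * (κ₁ / κ₃) ^ M * (d4Factor q κ₂ j k)⁻¹) * hexp

theorem Rop_matrix_elements_general (q κ₁ κ₂ κ₃ : ℂ) (r : ℤ)
    (hq0 : q ≠ 0) (hq1 : ‖q‖ < 1)
    (i j k : ℤ) :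
    -- well-definedness: the sum in D₃ applied to D₄|i,j,k⟩ has finitely many
    -- nonzero terms at each point of ℤ³
    (∀ p : ℤ × ℤ × ℤ,
      {m : ℕ | D3term q κ₁ κ₃ (D4 q κ₂ (delta i j k)) p m ≠ 0}.Finite) ∧
    -- well-definedness: the sum in D₂ applied to P(D₃(D₄|i,j,k⟩)) has finitely
    -- many nonzero terms at each point of ℤ³
    (∀ p : ℤ × ℤ × ℤ,
      {n : ℕ | D2term q (Pop q r (D3 q κ₁ κ₃ (D4 q κ₂ (delta i j k)))) p n ≠ 0}.Finite) ∧
    -- the explicit value of R|i,j,k⟩ at (a,b,c)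
    (∀ a b c : ℤ,
      Rop q κ₁ κ₂ κ₃ r (delta i j k) (a, b, c) =
        if a + b = i + j ∧ 0 ≤ b + r - k then
          (κ₁ / κ₃) ^ (b + r - k)
            * q ^ ((c - k + r) * (c + k - r - 2 * b) + 2 * i * (c - k))
            * (∏' n : ℕ, (1 + κ₃ * q ^ (2 * c - 2 * b + 2 * (n : ℤ) + 1)))
            * (∏' n : ℕ, (1 - q ^ (2 + 2 * j - 2 * c + 2 * (n : ℤ))))
            / ((∏' n : ℕ, (1 - q ^ (2 * (n : ℤ) + 2)))
                * (∏' n : ℕ, (1 + κ₂ * q ^ (2 * j - 2 * k + 2 * (n : ℤ) + 1)))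
                * (∏ t ∈ Finset.range (b + r - k).toNat,
                    (1 - q ^ (2 * k - 2 * b - 2 * r + 2 * (t : ℤ)))))
        else 0) := by
  refine ⟨fun ⟨x, y, z⟩ => ?_, fun ⟨a, b, c⟩ => ?_, fun a b c => ?_⟩
  · simpa only [D3term_D4_delta] using finite_setOf_ite_natCast_eq_ne_zero _ _ _
  · simpa only [D2term_Pop_D3_D4_delta] using finite_setOf_ite_natCast_eq_ne_zero _ _ _
  by_cases hsupp : a + b = i + j ∧ 0 ≤ b + r - k
  · rw [if_pos hsupp, Rop_delta_apply]
    by_cases hcj : 0 ≤ j - c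
    · rw [if_pos ⟨hsupp, hcj⟩]
      exact surviving_term_eq_closed_form hq0 hq1 hsupp.1 hsupp.2 hcj _
    · have hvanish : ∏' n : ℕ, (1 - q ^ (2 + 2 * j - 2 * c + 2 * (n : ℤ))) = 0 :=
        tprod_of_exists_eq_zero ⟨(c - j - 1).toNat, by
          rw [show 2 + 2 * j - 2 * c + 2 * ((c - j - 1).toNat : ℤ) = 0 by omega, zpow_zero,
            sub_self]⟩
      rw [if_neg fun h => hcj h.2, hvanish, mul_zero, mul_zero, zero_div]
  · rw [if_neg hsupp, Rop_delta_apply, if_neg fun h => hsupp h.1, mul_zero]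

theorem Rop_matrix_elements (q κ₁ κ₂ κ₃ : ℂ) (r : ℤ)
    (hq0 : q ≠ 0) (hq1 : ‖q‖ < 1)
    (hκ₁ : κ₁ ≠ 0) (hκ₂ : κ₂ ≠ 0) (hκ₃ : κ₃ ≠ 0)
    (hrel : κ₂ = κ₃ * q ^ (2 * r))
    (hreg : ∀ m : ℤ, κ₂ ≠ -q ^ (2 * m + 1))
    (i j k : ℤ) :
    -- well-definedness: the sum in D₃ applied to D₄|i,j,k⟩ has finitely many
    -- nonzero terms at each point of ℤ³
    (∀ p : ℤ × ℤ × ℤ,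
      {m : ℕ | D3term q κ₁ κ₃ (D4 q κ₂ (delta i j k)) p m ≠ 0}.Finite) ∧
    -- well-definedness: the sum in D₂ applied to P(D₃(D₄|i,j,k⟩)) has finitely
    -- many nonzero terms at each point of ℤ³
    (∀ p : ℤ × ℤ × ℤ,
      {n : ℕ | D2term q (Pop q r (D3 q κ₁ κ₃ (D4 q κ₂ (delta i j k)))) p n ≠ 0}.Finite) ∧
    -- the explicit value of R|i,j,k⟩ at (a,b,c)
    (∀ a b c : ℤ,
      Rop q κ₁ κ₂ κ₃ r (delta i j k) (a, b, c) =
        if a + b = i + j ∧ 0 ≤ b + r - k then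
          (κ₁ / κ₃) ^ (b + r - k)
            * q ^ ((c - k + r) * (c + k - r - 2 * b) + 2 * i * (c - k))
            * (∏' n : ℕ, (1 + κ₃ * q ^ (2 * c - 2 * b + 2 * (n : ℤ) + 1)))
            * (∏' n : ℕ, (1 - q ^ (2 + 2 * j - 2 * c + 2 * (n : ℤ))))
            / ((∏' n : ℕ, (1 - q ^ (2 * (n : ℤ) + 2)))
                * (∏' n : ℕ, (1 + κ₂ * q ^ (2 * j - 2 * k + 2 * (n : ℤ) + 1)))
                * (∏ t ∈ Finset.range (b + r - k).toNat,
                    (1 - q ^ (2 * k - 2 * b - 2 * r + 2 * (t : ℤ)))))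
        else 0) :=
  Rop_matrix_elements_general q κ₁ κ₂ κ₃ r hq0 hq1 i j k

end
end

section
/- The affine maps T_{ijk} satisfy the tetrahedron equation: T₄₅₆ ∘ T₂₃₆ ∘ T₁₃₅ ∘ T₁₂₄ = T₁₂₄ ∘ T₁₃₅ ∘ T₂₃₆ ∘ T₄₅₆ as affine endomorphisms of ℂ¹². -/
/-! Each `T_{ijk}` touches only the coordinates labelled `i`, `j`, `k`, and its formulas do not
depend on which labels these are, so the tetrahedron equation holds for any six distinct labels
`a, …, f`. A coordinate of either side is then either untouched by all four maps or labelled by one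
of `a, …, f`, and in the latter case both sides are the same affine expression in `u`, `w`, `λ`. -/

noncomputable section

/-- ℂ¹² with coordinates (u₁,…,u₆,w₁,…,w₆) (0-based indexing). -/
abbrev Pt : Type := (Fin 6 → ℂ) × (Fin 6 → ℂ)

/-- The affine map T_{ijk} replacing (u_i,w_i,u_j,w_j,u_k,w_k) by
(u_i+w_j−w_k+λ_j−λ_k, w_i+w_j−w_k, u_i+u_k−w_i, w_k, −u_i+u_j+w_i, w_j+λ_j−λ_k)
and fixing all other coordinates. -/
def Tmap (lam : Fin 6 → ℂ) (i j k : Fin 6) (p : Pt) : Pt :=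
  (fun t =>
      if t = i then p.1 i + p.2 j - p.2 k + lam j - lam k
      else if t = j then p.1 i + p.1 k - p.2 i
      else if t = k then -p.1 i + p.1 j + p.2 i
      else p.1 t,
   fun t =>
      if t = i then p.2 i + p.2 j - p.2 k
      else if t = j then p.2 k
      else if t = k then p.2 j + lam j - lam k
      else p.2 t)

section

variable (lam : Fin 6 → ℂ) {i j k : Fin 6} (p : Pt)

lemma Tmap_fst_left : (Tmap lam i j k p).1 i = p.1 i + p.2 j - p.2 k + lam j - lam k := by
  simp [Tmap]

lemma Tmap_snd_left : (Tmap lam i j k p).2 i = p.2 i + p.2 j - p.2 k := by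
  simp [Tmap]

lemma Tmap_fst_mid (hij : i ≠ j) : (Tmap lam i j k p).1 j = p.1 i + p.1 k - p.2 i := by
  simp [Tmap, hij.symm]

lemma Tmap_snd_mid (hij : i ≠ j) : (Tmap lam i j k p).2 j = p.2 k := by
  simp [Tmap, hij.symm]

lemma Tmap_fst_right (hik : i ≠ k) (hjk : j ≠ k) :
    (Tmap lam i j k p).1 k = -p.1 i + p.1 j + p.2 i := by
  simp [Tmap, hik.symm, hjk.symm]

lemma Tmap_snd_right (hik : i ≠ k) (hjk : j ≠ k) :
    (Tmap lam i j k p).2 k = p.2 j + lam j - lam k := by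
  simp [Tmap, hik.symm, hjk.symm]

lemma Tmap_fst_of_ne {t : Fin 6} (hi : t ≠ i) (hj : t ≠ j) (hk : t ≠ k) :
    (Tmap lam i j k p).1 t = p.1 t := by
  simp [Tmap, hi, hj, hk]

lemma Tmap_snd_of_ne {t : Fin 6} (hi : t ≠ i) (hj : t ≠ j) (hk : t ≠ k) :
    (Tmap lam i j k p).2 t = p.2 t := by
  simp [Tmap, hi, hj, hk]

end

theorem Tmap_tetrahedron_of_nodup (lam : Fin 6 → ℂ) {a b c d e f : Fin 6}
    (h : [a, b, c, d, e, f].Nodup) :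
    Tmap lam d e f ∘ Tmap lam b c f ∘ Tmap lam a c e ∘ Tmap lam a b d =
    Tmap lam a b d ∘ Tmap lam a c e ∘ Tmap lam b c f ∘ Tmap lam d e f := by
  simp only [List.nodup_cons, List.mem_cons, List.not_mem_nil, not_or] at h
  obtain ⟨⟨hab, hac, had, hae, haf, -⟩, ⟨hbc, hbd, hbe, hbf, -⟩, ⟨hcd, hce, hcf, -⟩,
    ⟨hde, hdf, -⟩, ⟨hef, -⟩, -⟩ := h
  funext p
  ext t <;>
  · obtain rfl | rfl | rfl | rfl | rfl | rfl | ⟨hta, htb, htc, htd, hte, htf⟩ :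
        t = a ∨ t = b ∨ t = c ∨ t = d ∨ t = e ∨ t = f ∨
        (t ≠ a ∧ t ≠ b ∧ t ≠ c ∧ t ≠ d ∧ t ≠ e ∧ t ≠ f) := by tauto
    all_goals
      simp only [Function.comp_apply, Tmap_fst_left, Tmap_snd_left, Tmap_fst_mid, Tmap_snd_mid,
        Tmap_fst_right, Tmap_snd_right, Tmap_fst_of_ne, Tmap_snd_of_ne, ne_eq, not_false_eq_true,
        Ne.symm, *]
    all_goals ring

/-- The tetrahedron equation for T (indices 1,…,6 represented 0-based). -/
theorem tetrahedron_T (lam : Fin 6 → ℂ) :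
    (Tmap lam 3 4 5) ∘ (Tmap lam 1 2 5) ∘ (Tmap lam 0 2 4) ∘ (Tmap lam 0 1 3) =
    (Tmap lam 0 1 3) ∘ (Tmap lam 0 2 4) ∘ (Tmap lam 1 2 5) ∘ (Tmap lam 3 4 5) :=
  Tmap_tetrahedron_of_nodup lam (by decide)

end
end

section
/- The affine maps S_{ijk} satisfy the tetrahedron equation: S₄₅₆ ∘ S₂₃₆ ∘ S₁₃₅ ∘ S₁₂₄ = S₁₂₄ ∘ S₁₃₅ ∘ S₂₃₆ ∘ S₄₅₆ as affine endomorphisms of ℂ¹². -/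
noncomputable section

/-- The affine map S_{ijk} replacing (u_i,w_i,u_j,w_j,u_k,w_k) by
(u_j−λ_i+λ_j, u_k+w_j−w_k, u_i, −u_k+w_i+w_k, −u_i+u_j+u_k, −u_i+u_j+w_k−λ_i+λ_j)
and fixing all other coordinates. -/
def Smap (lam : Fin 6 → ℂ) (i j k : Fin 6) (p : Pt) : Pt :=
  (fun t =>
      if t = i then p.1 j - lam i + lam j
      else if t = j then p.1 i
      else if t = k then -p.1 i + p.1 j + p.1 k
      else p.1 t,
   fun t =>
      if t = i then p.1 k + p.2 j - p.2 k
      else if t = j then -p.1 k + p.2 i + p.2 k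
      else if t = k then -p.1 i + p.1 j + p.2 k - lam i + lam j
      else p.2 t)

/-- The tetrahedron equation for S (indices 1,…,6 represented 0-based). -/
theorem tetrahedron_S (lam : Fin 6 → ℂ) :
    (Smap lam 3 4 5) ∘ (Smap lam 1 2 5) ∘ (Smap lam 0 2 4) ∘ (Smap lam 0 1 3) =
    (Smap lam 0 1 3) ∘ (Smap lam 0 2 4) ∘ (Smap lam 1 2 5) ∘ (Smap lam 3 4 5) := by
  funext p
  ext t <;> fin_cases t <;>
    simp only [Function.comp_apply, Smap, Fin.reduceFinMk, Fin.reduceEq, reduceIte] <;>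
    ring

end
end

section
/- The sign choices (+,−,+,−) and (−,−,+,+) are related by the canonical involution: S₁₂₃ with parameters (λ₁,λ₂,λ₃) equals σ ∘ T̃₁₂₃ ∘ σ, where T̃₁₂₃ denotes T₁₂₃ with the parameters (λ₁,λ₂,λ₃) replaced by (λ₃,λ₂,λ₁), and σ is the linear involution of ℂ¹² sending u_i ↦ w_{4−i} and w_i ↦ u_{4−i} for i = 1,2,3 and fixing all coordinates with indices 4,5,6. -/
/- STATEMENT 5: S₁₂₃ with parameters (λ₁,λ₂,λ₃) equals σ ∘ T̃₁₂₃ ∘ σ, where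
T̃₁₂₃ is T₁₂₃ with the parameters (λ₁,λ₂,λ₃) replaced by (λ₃,λ₂,λ₁), and σ is the
linear involution u_i ↦ w_{4−i}, w_i ↦ u_{4−i} (i = 1,2,3), fixing the
coordinates with indices 4,5,6. -/

noncomputable section

/-- The index involution i ↦ 4−i on the first three (1-based) indices,
0-based: 0 ↔ 2, 1 ↦ 1, identity on 3,4,5. -/
def flip3 : Fin 6 → Fin 6 := ![2, 1, 0, 3, 4, 5]

/-- The linear involution σ of ℂ¹² sending u_i ↦ w_{4−i} and w_i ↦ u_{4−i} for
i = 1,2,3 and fixing all coordinates with indices 4,5,6. -/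
def sigmaMap (p : Pt) : Pt :=
  (fun t => if t.val < 3 then p.2 (flip3 t) else p.1 t,
   fun t => if t.val < 3 then p.1 (flip3 t) else p.2 t)

/-- S₁₂₃(λ₁,λ₂,λ₃) = σ ∘ T₁₂₃(λ₃,λ₂,λ₁) ∘ σ (indices 1,2,3 represented
0-based as 0,1,2). -/
theorem S_eq_sigma_T_sigma (lam : Fin 6 → ℂ) :
    Smap lam 0 1 2 =
      sigmaMap ∘ Tmap ![lam 2, lam 1, lam 0, lam 3, lam 4, lam 5] 0 1 2 ∘ sigmaMap := by
  funext p
  ext t <;> fin_cases t <;> simp [Smap, Tmap, sigmaMap, flip3] <;> ring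

end
end

section
/- Conjugation by P implements the affine substitution τ^{uw}_{−−++} on the canonical generators: as operators on V₃ one has P∘E^{u₁} = q^{2r} E^{u₁}E^{w₂}E^{−w₃}∘P, P∘E^{w₁} = E^{w₁}E^{w₂}E^{−w₃}∘P, P∘E^{u₂} = q E^{u₃}E^{u₁}E^{−w₁}∘P, P∘E^{w₂} = E^{w₃}∘P, P∘E^{u₃} = q E^{u₂}E^{−u₁}E^{w₁}∘P, and P∘E^{w₃} = q^{2r} E^{w₂}∘P. -/
/- STATEMENT 6: conjugation by P implements the affine substitution τ^{uw}_{−−++}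
on the canonical generators of the q-Weyl algebras, as operators on V₃. -/

noncomputable section

/-- E^{u₁}: shift operator lowering the first index by 1 (on basis vectors);
on functions, (E^{u₁}f)(a,b,c) = f(a+1,b,c). -/
def Eu1 (f : W3) : W3 := fun p => f (p.1 + 1, p.2.1, p.2.2)
def Eu2 (f : W3) : W3 := fun p => f (p.1, p.2.1 + 1, p.2.2)
def Eu3 (f : W3) : W3 := fun p => f (p.1, p.2.1, p.2.2 + 1)
/-- E^{−u₁}: the inverse shift, raising the first index by 1. -/
def Eiu1 (f : W3) : W3 := fun p => f (p.1 - 1, p.2.1, p.2.2)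
def Eiu2 (f : W3) : W3 := fun p => f (p.1, p.2.1 - 1, p.2.2)
def Eiu3 (f : W3) : W3 := fun p => f (p.1, p.2.1, p.2.2 - 1)
/-- E^{w₁}: diagonal operator multiplying |m₁,m₂,m₃⟩ by q^{2m₁}. -/
def Ew1 (q : ℂ) (f : W3) : W3 := fun p => q ^ (2 * p.1) * f p
def Ew2 (q : ℂ) (f : W3) : W3 := fun p => q ^ (2 * p.2.1) * f p
def Ew3 (q : ℂ) (f : W3) : W3 := fun p => q ^ (2 * p.2.2) * f p
/-- E^{−w₁}: diagonal operator multiplying |m₁,m₂,m₃⟩ by q^{−2m₁}. -/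
def Eiw1 (q : ℂ) (f : W3) : W3 := fun p => q ^ (-(2 * p.1)) * f p
def Eiw2 (q : ℂ) (f : W3) : W3 := fun p => q ^ (-(2 * p.2.1)) * f p
def Eiw3 (q : ℂ) (f : W3) : W3 := fun p => q ^ (-(2 * p.2.2)) * f p

/-- Y₁ = κ₂⁻¹E^{−w₂}. -/
def Y1 (q κ₂ : ℂ) (f : W3) : W3 := κ₂⁻¹ • Eiw2 q f
/-- Y₂ = κ₂E^{u₂}. -/
def Y2 (κ₂ : ℂ) (f : W3) : W3 := κ₂ • Eu2 f
/-- Y₃ = κ₁⁻¹E^{−w₁}. -/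
def Y3 (q κ₁ : ℂ) (f : W3) : W3 := κ₁⁻¹ • Eiw1 q f
/-- Y₄ = κ₁E^{u₁}E^{−u₂}. -/
def Y4 (κ₁ : ℂ) (f : W3) : W3 := κ₁ • Eu1 (Eiu2 f)
/-- Y₅ = κ₃⁻¹E^{w₂}E^{−w₃}. -/
def Y5 (q κ₃ : ℂ) (f : W3) : W3 := κ₃⁻¹ • Ew2 q (Eiw3 q f)
/-- Y₆ = κ₃E^{u₃}. -/
def Y6 (κ₃ : ℂ) (f : W3) : W3 := κ₃ • Eu3 f
/-- Y₇ = E^{−u₁}. -/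
def Y7 (f : W3) : W3 := Eiu1 f
/-- Y₈ = E^{w₁}E^{−u₃}. -/
def Y8 (q : ℂ) (f : W3) : W3 := Ew1 q (Eiu3 f)
/-- Y₉ = E^{w₃}. -/
def Y9 (q : ℂ) (f : W3) : W3 := Ew3 q f

/-- Y′₁ = κ₃⁻¹E^{−w₃}. -/
def Y1' (q κ₃ : ℂ) (f : W3) : W3 := κ₃⁻¹ • Eiw3 q f
/-- Y′₂ = κ₁E^{u₁}. -/
def Y2' (κ₁ : ℂ) (f : W3) : W3 := κ₁ • Eu1 f
/-- Y′₃ = E^{−u₃}. -/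
def Y3' (f : W3) : W3 := Eiu3 f
/-- Y′₄ = κ₂E^{u₂}E^{−u₁}. -/
def Y4' (κ₂ : ℂ) (f : W3) : W3 := κ₂ • Eu2 (Eiu1 f)
/-- Y′₅ = κ₂⁻¹E^{w₃}E^{−w₂}. -/
def Y5' (q κ₂ : ℂ) (f : W3) : W3 := κ₂⁻¹ • Ew3 q (Eiw2 q f)
/-- Y′₆ = E^{w₁}. -/
def Y6' (q : ℂ) (f : W3) : W3 := Ew1 q f
/-- Y′₇ = E^{−u₂}. -/
def Y7' (f : W3) : W3 := Eiu2 f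
/-- Y′₈ = κ₁⁻¹κ₃E^{u₃}E^{−w₁}. -/
def Y8' (q κ₁ κ₃ : ℂ) (f : W3) : W3 := (κ₁⁻¹ * κ₃) • Eu3 (Eiw1 q f)
/-- Y′₉ = E^{w₂}. -/
def Y9' (q : ℂ) (f : W3) : W3 := Ew2 q f

/-! Every operator involved is monomial: f ↦ q^φ · (f ∘ σ) for a phase φ : ℤ³ → ℤ and an
affine map σ of ℤ³. For q ≠ 0 these compose like a semidirect product, so each relation reduces
to an identity between affine maps and one between quadratic phases, both polynomial
identities in the coordinates. -/

def monomialOp {ι K : Type*} [GroupWithZero K] (q : K) (φ : ι → ℤ) (σ : ι → ι) (f : ι → K) :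
    ι → K :=
  fun p => q ^ φ p * f (σ p)

section MonomialOp

variable {ι K : Type*} [GroupWithZero K] {q : K}

theorem monomialOp_monomialOp (hq : q ≠ 0) (φ ψ : ι → ℤ) (σ τ : ι → ι) (f : ι → K) :
    monomialOp q φ σ (monomialOp q ψ τ f) = monomialOp q (fun p => φ p + ψ (σ p)) (τ ∘ σ) f := by
  funext p
  simp only [monomialOp, Function.comp_apply, ← mul_assoc, zpow_add₀ hq]

theorem zpow_smul_monomialOp (hq : q ≠ 0) (c : ℤ) (φ : ι → ℤ) (σ : ι → ι) (f : ι → K) :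
    q ^ c • monomialOp q φ σ f = monomialOp q (fun p => c + φ p) σ f := by
  funext p
  simp only [monomialOp, Pi.smul_apply, smul_eq_mul, ← mul_assoc, zpow_add₀ hq]

theorem smul_monomialOp (hq : q ≠ 0) (φ : ι → ℤ) (σ : ι → ι) (f : ι → K) :
    q • monomialOp q φ σ f = monomialOp q (fun p => 1 + φ p) σ f := by
  simpa using zpow_smul_monomialOp hq 1 φ σ f

theorem monomialOp_congr {φ φ' : ι → ℤ} {σ σ' : ι → ι} (hφ : ∀ p, φ p = φ' p)
    (hσ : ∀ p, σ p = σ' p) (f : ι → K) : monomialOp q φ σ f = monomialOp q φ' σ' f := by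
  funext p
  simp only [monomialOp, hφ, hσ]

end MonomialOp

section Generators

variable (q : ℂ) (f : W3)

theorem Eu1_eq_monomialOp : Eu1 f = monomialOp q 0 (fun p => (p.1 + 1, p.2.1, p.2.2)) f := by
  funext p; simp [Eu1, monomialOp]

theorem Eu2_eq_monomialOp : Eu2 f = monomialOp q 0 (fun p => (p.1, p.2.1 + 1, p.2.2)) f := by
  funext p; simp [Eu2, monomialOp]

theorem Eu3_eq_monomialOp : Eu3 f = monomialOp q 0 (fun p => (p.1, p.2.1, p.2.2 + 1)) f := by
  funext p; simp [Eu3, monomialOp]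

theorem Eiu1_eq_monomialOp : Eiu1 f = monomialOp q 0 (fun p => (p.1 - 1, p.2.1, p.2.2)) f := by
  funext p; simp [Eiu1, monomialOp]

theorem Ew1_eq_monomialOp : Ew1 q f = monomialOp q (fun p => 2 * p.1) id f := rfl

theorem Ew2_eq_monomialOp : Ew2 q f = monomialOp q (fun p => 2 * p.2.1) id f := rfl

theorem Ew3_eq_monomialOp : Ew3 q f = monomialOp q (fun p => 2 * p.2.2) id f := rfl

theorem Eiw1_eq_monomialOp : Eiw1 q f = monomialOp q (fun p => -(2 * p.1)) id f := rfl

theorem Eiw3_eq_monomialOp : Eiw3 q f = monomialOp q (fun p => -(2 * p.2.2)) id f := rfl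

theorem Pop_eq_monomialOp (r : ℤ) :
    Pop q r f = monomialOp q
      (fun p => (p.2.1 - p.2.2) * (p.2.1 - p.2.2 - 2 * (p.1 + p.2.1 - p.2.2))
        - 2 * r * (p.1 + p.2.1 - p.2.2))
      (fun p => (p.1 + p.2.1 - p.2.2, p.2.2, p.2.1 + r)) f := rfl

end Generators

/-- P∘E^{u₁} = q^{2r}E^{u₁}E^{w₂}E^{−w₃}∘P, P∘E^{w₁} = E^{w₁}E^{w₂}E^{−w₃}∘P,
P∘E^{u₂} = qE^{u₃}E^{u₁}E^{−w₁}∘P, P∘E^{w₂} = E^{w₃}∘P,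
P∘E^{u₃} = qE^{u₂}E^{−u₁}E^{w₁}∘P, P∘E^{w₃} = q^{2r}E^{w₂}∘P, on V₃. -/
theorem Pop_conjugation (q : ℂ) (hq : q ≠ 0) (r : ℤ) :
    ∀ f : W3, (Function.support f).Finite →
      (Pop q r (Eu1 f) = q ^ (2 * r) • Eu1 (Ew2 q (Eiw3 q (Pop q r f)))) ∧
      (Pop q r (Ew1 q f) = Ew1 q (Ew2 q (Eiw3 q (Pop q r f)))) ∧
      (Pop q r (Eu2 f) = q • Eu3 (Eu1 (Eiw1 q (Pop q r f)))) ∧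
      (Pop q r (Ew2 q f) = Ew3 q (Pop q r f)) ∧
      (Pop q r (Eu3 f) = q • Eu2 (Eiu1 (Ew1 q (Pop q r f)))) ∧
      (Pop q r (Ew3 q f) = q ^ (2 * r) • Ew2 q (Pop q r f)) := by
  intro f _
  simp only [Pop_eq_monomialOp, Eu1_eq_monomialOp q, Eu2_eq_monomialOp q, Eu3_eq_monomialOp q,
    Eiu1_eq_monomialOp q, Ew1_eq_monomialOp, Ew2_eq_monomialOp, Ew3_eq_monomialOp,
    Eiw1_eq_monomialOp, Eiw3_eq_monomialOp, monomialOp_monomialOp hq, zpow_smul_monomialOp hq,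
    smul_monomialOp hq]
  refine ⟨?_, ?_, ?_, ?_, ?_, ?_⟩ <;> apply monomialOp_congr <;> intro p <;>
    simp only [Function.comp_apply, id, Pi.zero_apply, Prod.mk.injEq] <;> grind

end
end

section
/- The operator P intertwines the primed Y-operators with the monomial images of the mutation sequence τ_{−−++}: as operators on V₃ one has P∘Y′₁ = Y₁∘P, P∘Y′₂ = Y₂Y₄Y₅∘P, P∘Y′₃ = q^{-1}Y₃Y₄∘P, P∘Y′₄ = qY₅^{-1}Y₈^{-1}∘P, P∘Y′₅ = Y₅∘P, P∘Y′₆ = Y₅Y₆Y₈∘P, P∘Y′₇ = qY₇Y₈∘P, P∘Y′₈ = qY₄^{-1}Y₅^{-1}∘P, and P∘Y′₉ = Y₉∘P. -/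
/-!
All operators involved, the shifts and diagonal operators as well as `P` itself, are weighted
composition operators `f ↦ (p ↦ c q^{e p} f (σ p))`, and these are closed under composition: the
constants multiply, the substitutions compose and the exponents add along the substitution. Writing
`κ₂ = κ₃ q^{2r}` and moving every constant power of `q` into the exponent, each relation becomes an
identity of such operators whose constants are monomials in `κ₁, κ₃`, whose substitutions are
affine maps of `ℤ³`, and whose exponents are integer polynomials. The exponent identity is where
the quadratic phase of `P` absorbs the commutation `E^{u}E^{w} = q²E^{w}E^{u}`.
-/

noncomputable section

/-- Y₄⁻¹ = κ₁⁻¹E^{−u₁}E^{u₂}, the two-sided inverse of Y₄ = κ₁E^{u₁}E^{−u₂}. -/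
def Y4inv (κ₁ : ℂ) (f : W3) : W3 := κ₁⁻¹ • Eiu1 (Eu2 f)
/-- Y₅⁻¹ = κ₃E^{−w₂}E^{w₃}, the two-sided inverse of Y₅ = κ₃⁻¹E^{w₂}E^{−w₃}. -/
def Y5inv (q κ₃ : ℂ) (f : W3) : W3 := κ₃ • Eiw2 q (Ew3 q f)
/-- Y₈⁻¹ = E^{−w₁}E^{u₃}, the two-sided inverse of Y₈ = E^{w₁}E^{−u₃}. -/
def Y8inv (q : ℂ) (f : W3) : W3 := Eiw1 q (Eu3 f)

section WeightedComp

variable {α K : Type*} [CommGroupWithZero K] (q : K)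

def weightedComp (c : K) (e : α → ℤ) (σ : α → α) (f : α → K) : α → K :=
  fun p => c * q ^ e p * f (σ p)

theorem smul_weightedComp (a c : K) (e : α → ℤ) (σ : α → α) (f : α → K) :
    a • weightedComp q c e σ f = weightedComp q (a * c) e σ f := by
  funext p
  simp only [weightedComp, Pi.smul_apply, smul_eq_mul, mul_assoc]

theorem zpow_smul_eq_weightedComp (k : ℤ) (f : α → K) :
    q ^ k • f = weightedComp q 1 (fun _ => k) (fun p => p) f := by
  funext p
  simp only [weightedComp, Pi.smul_apply, smul_eq_mul, one_mul]

theorem self_smul_eq_weightedComp (f : α → K) :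
    q • f = weightedComp q 1 (fun _ => 1) (fun p => p) f := by
  rw [← zpow_smul_eq_weightedComp, zpow_one]

variable {q}

theorem weightedComp_weightedComp (hq : q ≠ 0) (c c' : K) (e e' : α → ℤ) (σ σ' : α → α)
    (f : α → K) :
    weightedComp q c e σ (weightedComp q c' e' σ' f) =
      weightedComp q (c * c') (fun p => e p + e' (σ p)) (fun p => σ' (σ p)) f := by
  funext p
  simp only [weightedComp, zpow_add₀ hq]
  ac_rfl

theorem weightedComp_congr {c c' : K} {e e' : α → ℤ} {σ σ' : α → α} (hc : c = c')
    (he : ∀ p, e p = e' p) (hσ : ∀ p, σ p = σ' p) (f : α → K) :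
    weightedComp q c e σ f = weightedComp q c' e' σ' f := by
  rw [hc, funext he, funext hσ]

end WeightedComp

section Realization

variable (q : ℂ)

theorem Eu1_eq_weightedComp :
    Eu1 = weightedComp q 1 (fun _ => 0) (fun p => (p.1 + 1, p.2.1, p.2.2)) := by
  funext f p; simp [Eu1, weightedComp]

theorem Eu2_eq_weightedComp :
    Eu2 = weightedComp q 1 (fun _ => 0) (fun p => (p.1, p.2.1 + 1, p.2.2)) := by
  funext f p; simp [Eu2, weightedComp]

theorem Eu3_eq_weightedComp :
    Eu3 = weightedComp q 1 (fun _ => 0) (fun p => (p.1, p.2.1, p.2.2 + 1)) := by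
  funext f p; simp [Eu3, weightedComp]

theorem Eiu1_eq_weightedComp :
    Eiu1 = weightedComp q 1 (fun _ => 0) (fun p => (p.1 - 1, p.2.1, p.2.2)) := by
  funext f p; simp [Eiu1, weightedComp]

theorem Eiu2_eq_weightedComp :
    Eiu2 = weightedComp q 1 (fun _ => 0) (fun p => (p.1, p.2.1 - 1, p.2.2)) := by
  funext f p; simp [Eiu2, weightedComp]

theorem Eiu3_eq_weightedComp :
    Eiu3 = weightedComp q 1 (fun _ => 0) (fun p => (p.1, p.2.1, p.2.2 - 1)) := by
  funext f p; simp [Eiu3, weightedComp]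

theorem Ew1_eq_weightedComp : Ew1 q = weightedComp q 1 (fun p => 2 * p.1) (fun p => p) := by
  funext f p; simp [Ew1, weightedComp]

theorem Ew2_eq_weightedComp : Ew2 q = weightedComp q 1 (fun p => 2 * p.2.1) (fun p => p) := by
  funext f p; simp [Ew2, weightedComp]

theorem Ew3_eq_weightedComp : Ew3 q = weightedComp q 1 (fun p => 2 * p.2.2) (fun p => p) := by
  funext f p; simp [Ew3, weightedComp]

theorem Eiw1_eq_weightedComp :
    Eiw1 q = weightedComp q 1 (fun p => -(2 * p.1)) (fun p => p) := by
  funext f p; simp [Eiw1, weightedComp]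

theorem Eiw2_eq_weightedComp :
    Eiw2 q = weightedComp q 1 (fun p => -(2 * p.2.1)) (fun p => p) := by
  funext f p; simp [Eiw2, weightedComp]

theorem Eiw3_eq_weightedComp :
    Eiw3 q = weightedComp q 1 (fun p => -(2 * p.2.2)) (fun p => p) := by
  funext f p; simp [Eiw3, weightedComp]

theorem Pop_eq_weightedComp (r : ℤ) :
    Pop q r = weightedComp q 1
      (fun p => (p.2.1 - p.2.2) * (p.2.1 - p.2.2 - 2 * (p.1 + p.2.1 - p.2.2))
        - 2 * r * (p.1 + p.2.1 - p.2.2))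
      (fun p => (p.1 + p.2.1 - p.2.2, p.2.2, p.2.1 + r)) := by
  funext f p; simp [Pop, weightedComp]

end Realization

theorem Pop_intertwines_tau_general (q : ℂ) (hq : q ≠ 0) (κ₁ κ₂ κ₃ : ℂ)
    (hκ₁ : κ₁ ≠ 0) (hκ₃ : κ₃ ≠ 0) (r : ℤ)
    (hrel : κ₂ = κ₃ * q ^ (2 * r)) :
    ∀ f : W3, (Function.support f).Finite →
      (Pop q r (Y1' q κ₃ f) = Y1 q κ₂ (Pop q r f)) ∧
      (Pop q r (Y2' κ₁ f) = Y2 κ₂ (Y4 κ₁ (Y5 q κ₃ (Pop q r f)))) ∧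
      (Pop q r (Y3' f) = q⁻¹ • Y3 q κ₁ (Y4 κ₁ (Pop q r f))) ∧
      (Pop q r (Y4' κ₂ f) = q • Y5inv q κ₃ (Y8inv q (Pop q r f))) ∧
      (Pop q r (Y5' q κ₂ f) = Y5 q κ₃ (Pop q r f)) ∧
      (Pop q r (Y6' q f) = Y5 q κ₃ (Y6 κ₃ (Y8 q (Pop q r f)))) ∧
      (Pop q r (Y7' f) = q • Y7 (Y8 q (Pop q r f))) ∧
      (Pop q r (Y8' q κ₁ κ₃ f) = q • Y4inv κ₁ (Y5inv q κ₃ (Pop q r f))) ∧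
      (Pop q r (Y9' q f) = Y9 q (Pop q r f)) := by
  intro f _
  subst hrel
  refine ⟨?_, ?_, ?_, ?_, ?_, ?_, ?_, ?_, ?_⟩ <;>
  -- Scalar powers of `q` must become exponents before `smul_weightedComp` can absorb them.
  · simp only [Y1, Y2, Y3, Y4, Y5, Y6, Y7, Y8, Y9, Y1', Y2', Y3', Y4', Y5', Y6', Y7', Y8', Y9',
      Y4inv, Y5inv, Y8inv, mul_inv, mul_smul, ← zpow_neg, ← zpow_neg_one q,
      zpow_smul_eq_weightedComp q, self_smul_eq_weightedComp q]
    simp only [Eu1_eq_weightedComp q, Eu2_eq_weightedComp q, Eu3_eq_weightedComp q,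
      Eiu1_eq_weightedComp q, Eiu2_eq_weightedComp q, Eiu3_eq_weightedComp q,
      Ew1_eq_weightedComp, Ew2_eq_weightedComp, Ew3_eq_weightedComp, Eiw1_eq_weightedComp,
      Eiw2_eq_weightedComp, Eiw3_eq_weightedComp, Pop_eq_weightedComp, smul_weightedComp,
      weightedComp_weightedComp hq]
    refine weightedComp_congr ?_ (fun p => ?_) (fun p => ?_) f
    · field_simp
    · ring
    · ext <;> dsimp <;> ring

/-- P∘Y′₁ = Y₁∘P, P∘Y′₂ = Y₂Y₄Y₅∘P, P∘Y′₃ = q⁻¹Y₃Y₄∘P, P∘Y′₄ = qY₅⁻¹Y₈⁻¹∘P,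
P∘Y′₅ = Y₅∘P, P∘Y′₆ = Y₅Y₆Y₈∘P, P∘Y′₇ = qY₇Y₈∘P, P∘Y′₈ = qY₄⁻¹Y₅⁻¹∘P,
P∘Y′₉ = Y₉∘P, on V₃. -/
theorem Pop_intertwines_tau (q : ℂ) (hq : q ≠ 0) (κ₁ κ₂ κ₃ : ℂ)
    (hκ₁ : κ₁ ≠ 0) (hκ₂ : κ₂ ≠ 0) (hκ₃ : κ₃ ≠ 0) (r : ℤ)
    (hrel : κ₂ = κ₃ * q ^ (2 * r)) :
    ∀ f : W3, (Function.support f).Finite →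
      (Pop q r (Y1' q κ₃ f) = Y1 q κ₂ (Pop q r f)) ∧
      (Pop q r (Y2' κ₁ f) = Y2 κ₂ (Y4 κ₁ (Y5 q κ₃ (Pop q r f)))) ∧
      (Pop q r (Y3' f) = q⁻¹ • Y3 q κ₁ (Y4 κ₁ (Pop q r f))) ∧
      (Pop q r (Y4' κ₂ f) = q • Y5inv q κ₃ (Y8inv q (Pop q r f))) ∧
      (Pop q r (Y5' q κ₂ f) = Y5 q κ₃ (Pop q r f)) ∧
      (Pop q r (Y6' q f) = Y5 q κ₃ (Y6 κ₃ (Y8 q (Pop q r f)))) ∧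
      (Pop q r (Y7' f) = q • Y7 (Y8 q (Pop q r f))) ∧
      (Pop q r (Y8' q κ₁ κ₃ f) = q • Y4inv κ₁ (Y5inv q κ₃ (Pop q r f))) ∧
      (Pop q r (Y9' q f) = Y9 q (Pop q r f)) :=
  Pop_intertwines_tau_general q hq κ₁ κ₂ κ₃ hκ₁ hκ₃ r hrel

end
end
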